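/- arXiv:2103.07775 — 2 statements merged into one kernel-verified Lean document; each statement's English description precedes it below -/
import Mathlib

section
/- Let d > 0, r > 0, c ∈ ℝ, and let (U,V;c) be a propagation front (in the weak sense of Definition df:front) connecting (U₋,V₋) = (0,1) to (U₊,V₊) = (1,0). Then the function ξ ↦ V(ξ)(1 − V(ξ)) is integrable on ℝ and c = r ∫_ℝ V(ξ)(1 − V(ξ)) dξ; in particular c > 0. -/
/-!
Test the weak `V`-equation against the plateau cutoffs `ψ_R`, equal to `1` on `[-R, R]`,
supported in `[-R-1, R+1]` and with `|ψ_R'|` bounded uniformly in `R`: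
`∫ (1-U)V' ψ_R' + c ∫ V ψ_R' = r ∫ V(1-V) ψ_R`.
Since `ψ_R'` lives on the annulus `R ≤ |ξ| ≤ R+1`, of measure `2`, Cauchy–Schwarz and the
`L²` bound send the first term to `0`, while the second tends to `V(-∞) - V(+∞) = 1`.
So `r ∫ V(1-V) ψ_R → c`; Fatou's lemma makes `V(1-V)` integrable and dominated convergence
identifies the limit. Finally `∫ V(1-V) > 0` because `V` passes through `1/2`.
-/

open Filter Topology MeasureTheory

/-- A propagation front in the weak sense (Definition df:front) for the reduced
Gatenby–Gawlinski system, connecting `(Um, Vm)` to `(Up, Vp)`. -/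
def IsWeakFront (d r c : ℝ) (U V : ℝ → ℝ) (Um Vm Up Vp : ℝ) : Prop :=
  Continuous U ∧ Continuous V ∧
  (∀ ξ : ℝ, U ξ ∈ Set.Icc (0 : ℝ) 1) ∧ (∀ ξ : ℝ, V ξ ∈ Set.Icc (0 : ℝ) 1) ∧
  Differentiable ℝ V ∧
  MemLp (fun ξ => (1 - U ξ) * deriv V ξ) 2 volume ∧
  (∀ φ : ℝ → ℝ, ContDiff ℝ 1 φ → HasCompactSupport φ →
    ∫ ξ : ℝ, U ξ * (c * deriv φ ξ - (1 - U ξ - d * V ξ) * φ ξ) = 0) ∧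
  (∀ ψ : ℝ → ℝ, ContDiff ℝ 1 ψ → HasCompactSupport ψ →
    ∫ ξ : ℝ, (((1 - U ξ) * deriv V ξ + c * V ξ) * deriv ψ ξ
        - r * V ξ * (1 - V ξ) * ψ ξ) = 0) ∧
  Tendsto U atBot (𝓝 Um) ∧ Tendsto V atBot (𝓝 Vm) ∧
  Tendsto U atTop (𝓝 Up) ∧ Tendsto V atTop (𝓝 Vp)

open Set Real

noncomputable def plateau (R x : ℝ) : ℝ :=
  smoothTransition (R + 1 - x) * smoothTransition (R + 1 + x)

def annulus (R : ℝ) : Set ℝ := Icc (-(R + 1)) (-R) ∪ Icc R (R + 1)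

section Plateau

variable {R x : ℝ}

theorem contDiff_plateau (R : ℝ) {n : ℕ∞} : ContDiff ℝ n (plateau R) :=
  (smoothTransition.contDiff.comp (contDiff_const.sub contDiff_id)).mul
    (smoothTransition.contDiff.comp (contDiff_const.add contDiff_id))

theorem plateau_nonneg (R x : ℝ) : 0 ≤ plateau R x :=
  mul_nonneg (smoothTransition.nonneg _) (smoothTransition.nonneg _)

theorem plateau_le_one (R x : ℝ) : plateau R x ≤ 1 :=
  mul_le_one₀ (smoothTransition.le_one _) (smoothTransition.nonneg _) (smoothTransition.le_one _)

theorem plateau_eq_one (hx : |x| ≤ R) : plateau R x = 1 := by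
  rw [abs_le] at hx
  rw [plateau, smoothTransition.one_of_one_le (by linarith),
    smoothTransition.one_of_one_le (by linarith), mul_one]

theorem plateau_eq_zero (hx : R + 1 ≤ |x|) : plateau R x = 0 := by
  rcases le_total 0 x with h | h
  · rw [abs_of_nonneg h] at hx
    rw [plateau, smoothTransition.zero_of_nonpos (by linarith), zero_mul]
  · rw [abs_of_nonpos h] at hx
    rw [plateau, smoothTransition.zero_of_nonpos (x := R + 1 + x) (by linarith), mul_zero]

theorem hasCompactSupport_plateau (R : ℝ) : HasCompactSupport (plateau R) :=
  HasCompactSupport.intro (isCompact_Icc (a := -(R + 1)) (b := R + 1)) fun _ hx =>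
    plateau_eq_zero (le_abs'.mpr (by rw [mem_Icc, not_and_or, not_le, not_le] at hx; grind))

theorem tendsto_plateau_atTop (x : ℝ) : Tendsto (fun R => plateau R x) atTop (𝓝 1) :=
  tendsto_const_nhds.congr' <| (eventually_ge_atTop |x|).mono fun _ hR => (plateau_eq_one hR).symm

theorem continuous_deriv_plateau (R : ℝ) : Continuous (deriv (plateau R)) :=
  (contDiff_plateau R (n := 1)).continuous_deriv le_rfl

theorem integrable_deriv_plateau (R : ℝ) : Integrable (deriv (plateau R)) :=
  (continuous_deriv_plateau R).integrable_of_hasCompactSupport (hasCompactSupport_plateau R).deriv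

theorem integral_deriv_plateau (R : ℝ) : ∫ x, deriv (plateau R) x = 0 :=
  integral_eq_zero_of_hasDerivAt_of_integrable
    (fun x => ((contDiff_plateau R (n := 1)).differentiable one_ne_zero x).hasDerivAt)
    (integrable_deriv_plateau R)
    ((contDiff_plateau R (n := 0)).continuous.integrable_of_hasCompactSupport
      (hasCompactSupport_plateau R))

theorem integral_Iic_zero_deriv_plateau (hR : 0 ≤ R) :
    ∫ x in Iic 0, deriv (plateau R) x = 1 := by
  rw [(hasCompactSupport_plateau R).integral_Iic_deriv_eq (contDiff_plateau R) 0,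
    plateau_eq_one (by simpa using hR)]

theorem deriv_plateau_eq_zero (hx : x ∉ annulus R) : deriv (plateau R) x = 0 := by
  simp only [annulus, mem_union, mem_Icc, not_or, not_and_or, not_le] at hx
  rcases lt_or_ge |x| R with h | h
  · have : plateau R =ᶠ[𝓝 x] fun _ => 1 :=
      eventually_of_mem ((isOpen_lt continuous_abs continuous_const).mem_nhds h) fun _ hy =>
        plateau_eq_one (le_of_lt hy)
    rw [this.deriv_eq, deriv_const]
  · have h' : R + 1 < |x| := by grind
    have : plateau R =ᶠ[𝓝 x] fun _ => 0 :=
      eventually_of_mem ((isOpen_lt continuous_const continuous_abs).mem_nhds h') fun _ hy =>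
        plateau_eq_zero (le_of_lt hy)
    rw [this.deriv_eq, deriv_const]

theorem exists_abs_deriv_smoothTransition_le : ∃ C, ∀ x, |deriv smoothTransition x| ≤ C := by
  refine (smoothTransition.contDiff.continuous_deriv le_rfl).bounded_above_of_compact_support
    (HasCompactSupport.intro (isCompact_Icc (a := 0) (b := 1)) fun x hx => ?_)
  rw [mem_Icc, not_and_or, not_le, not_le] at hx
  rcases hx with hx | hx
  · have : smoothTransition =ᶠ[𝓝 x] fun _ => 0 := eventually_of_mem (Iio_mem_nhds hx)
      fun _ hy => smoothTransition.zero_of_nonpos (le_of_lt hy)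
    rw [this.deriv_eq, deriv_const]
  · have : smoothTransition =ᶠ[𝓝 x] fun _ => 1 := eventually_of_mem (Ioi_mem_nhds hx)
      fun _ hy => smoothTransition.one_of_one_le (le_of_lt hy)
    rw [this.deriv_eq, deriv_const]

theorem exists_abs_deriv_plateau_le : ∃ K, ∀ R x, |deriv (plateau R) x| ≤ K := by
  obtain ⟨C, hC⟩ := exists_abs_deriv_smoothTransition_le
  refine ⟨2 * C, fun R x => ?_⟩
  have hχ : Differentiable ℝ smoothTransition :=
    (smoothTransition.contDiff (n := 1)).differentiable one_ne_zero
  have h₁ := (hχ (R + 1 - x)).hasDerivAt.comp x ((hasDerivAt_id x).const_sub (R + 1))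
  have h₂ := (hχ (R + 1 + x)).hasDerivAt.comp x ((hasDerivAt_id x).const_add (R + 1))
  have hC₀ : 0 ≤ C := (abs_nonneg _).trans (hC 0)
  have hderiv : HasDerivAt (plateau R) _ x := h₁.mul h₂
  rw [hderiv.deriv]
  simp only [Function.comp_apply, mul_one, mul_neg]
  calc _ ≤ |deriv smoothTransition (R + 1 - x)| * |smoothTransition (R + 1 + x)|
        + |smoothTransition (R + 1 - x)| * |deriv smoothTransition (R + 1 + x)| := by
          refine (abs_add_le _ _).trans_eq ?_
          rw [abs_mul, abs_mul, abs_neg]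
    _ ≤ C * 1 + 1 * C := by
          gcongr
          · exact hC _
          · exact abs_le.2 ⟨by linarith [smoothTransition.nonneg (R + 1 + x)],
              smoothTransition.le_one _⟩
          · exact abs_le.2 ⟨by linarith [smoothTransition.nonneg (R + 1 - x)],
              smoothTransition.le_one _⟩
          · exact hC _
    _ = 2 * C := by ring

theorem isCompact_annulus (R : ℝ) : IsCompact (annulus R) :=
  isCompact_Icc.union isCompact_Icc

theorem measurableSet_annulus (R : ℝ) : MeasurableSet (annulus R) :=
  (isCompact_annulus R).measurableSet

theorem le_abs_of_mem_annulus (hx : x ∈ annulus R) : R ≤ |x| := by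
  rcases hx with ⟨-, h⟩ | ⟨h, -⟩
  · exact (le_neg.mpr h).trans (neg_le_abs x)
  · exact h.trans (le_abs_self x)

theorem volume_annulus_le (R : ℝ) : volume (annulus R) ≤ 2 := by
  refine (measure_union_le _ _).trans ?_
  rw [Real.volume_Icc, Real.volume_Icc, ← ENNReal.ofReal_add (by linarith) (by linarith)]
  norm_num

theorem volume_annulus_lt_top (R : ℝ) : volume (annulus R) < ⊤ :=
  (volume_annulus_le R).trans_lt (by norm_num)

theorem measureReal_annulus_le (R : ℝ) : volume.real (annulus R) ≤ 2 :=
  ENNReal.toReal_le_of_le_ofReal zero_le_two (by simpa using volume_annulus_le R)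

end Plateau

theorem setIntegral_abs_le_sqrt_mul_sqrt {α : Type*} [MeasurableSpace α] {μ : Measure α}
    {s : Set α} (hs : μ s < ⊤) {f : α → ℝ} (hf : MemLp f 2 μ) :
    ∫ x in s, |f x| ∂μ ≤ √(∫ x in s, f x ^ 2 ∂μ) * √(μ.real s) := by
  have : Fact (μ s < ⊤) := ⟨hs⟩
  have h := integral_mul_le_Lp_mul_Lq_of_nonneg (μ := μ.restrict s) Real.HolderConjugate.two_two
    (f := fun x => |f x|) (g := fun _ => 1) (ae_of_all _ fun _ => abs_nonneg _)
    (ae_of_all _ fun _ => zero_le_one) (by rw [ENNReal.ofReal_ofNat]; exact hf.abs.restrict s)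
    (by simpa using memLp_const 1)
  simpa [Real.sqrt_eq_rpow, sq_abs] using h

theorem tendsto_setIntegral_le_abs_atTop {f : ℝ → ℝ} (hf : Integrable f) :
    Tendsto (fun R => ∫ x in {x | R ≤ |x|}, f x) atTop (𝓝 0) := by
  have h := tendsto_setIntegral_of_antitone (μ := volume) (f := f)
    (fun R => measurableSet_le measurable_const measurable_abs)
    (fun R R' hRR' x (hx : R' ≤ |x|) => hRR'.trans hx) ⟨0, hf.integrableOn⟩
  have hempty : ⋂ R : ℝ, {x : ℝ | R ≤ |x|} = ∅ :=
    eq_empty_of_forall_notMem fun x hx => by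
      have := mem_iInter.mp hx (|x| + 1)
      simp only [mem_ofPred_eq] at this
      linarith
  simpa [hempty] using h

theorem tendsto_setIntegral_abs_annulus_of_memLp_two {f : ℝ → ℝ} (hf : MemLp f 2) :
    Tendsto (fun R => ∫ x in annulus R, |f x|) atTop (𝓝 0) := by
  have htail := ((tendsto_setIntegral_le_abs_atTop hf.integrable_sq).sqrt).mul_const √2
  rw [Real.sqrt_zero, zero_mul] at htail
  refine squeeze_zero (fun R => setIntegral_nonneg (measurableSet_annulus R) fun _ _ =>
    abs_nonneg _) (fun R => ?_) htail
  calc ∫ x in annulus R, |f x|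
      ≤ √(∫ x in annulus R, f x ^ 2) * √(volume.real (annulus R)) :=
        setIntegral_abs_le_sqrt_mul_sqrt (volume_annulus_lt_top R) hf
    _ ≤ √(∫ x in {x | R ≤ |x|}, f x ^ 2) * √2 := by
        gcongr
        · exact ae_of_all _ fun _ => sq_nonneg _
        · exact hf.integrable_sq.integrableOn
        · exact fun x hx => le_abs_of_mem_annulus hx
        · exact measureReal_annulus_le R

theorem tendsto_setIntegral_abs_annulus_of_tendsto_cocompact {f : ℝ → ℝ}
    (hf : Tendsto f (cocompact ℝ) (𝓝 0)) :
    Tendsto (fun R => ∫ x in annulus R, |f x|) atTop (𝓝 0) := by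
  rw [cocompact_eq_atBot_atTop, ← comap_abs_atTop] at hf
  rw [Metric.tendsto_atTop]
  intro ε hε
  obtain ⟨N, hN⟩ : ∃ N, ∀ b : ℝ, N ≤ b → ∀ x : ℝ, |x| = b → |f x| < ε / 3 := by
    simpa [Real.dist_eq] using
      eventually_comap.mp (Metric.tendsto_nhds.mp hf (ε / 3) (by positivity))
  refine ⟨N, fun R hR => ?_⟩
  have hnonneg : 0 ≤ ∫ x in annulus R, |f x| :=
    setIntegral_nonneg (measurableSet_annulus R) fun _ _ => abs_nonneg _
  have hbound := norm_setIntegral_le_of_norm_le_const (f := fun x => |f x|)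
    (volume_annulus_lt_top R)
    fun x hx => by simpa using (hN _ (hR.trans (le_abs_of_mem_annulus hx)) x rfl).le
  rw [Real.norm_eq_abs, abs_of_nonneg hnonneg] at hbound
  rw [Real.dist_eq, sub_zero, abs_of_nonneg hnonneg]
  nlinarith [measureReal_annulus_le R]

theorem abs_integral_mul_deriv_plateau_le {φ : ℝ → ℝ} {R K : ℝ}
    (hK : ∀ x, |deriv (plateau R) x| ≤ K) (hφ : IntegrableOn φ (annulus R)) :
    |∫ x, φ x * deriv (plateau R) x| ≤ K * ∫ x in annulus R, |φ x| := by
  rw [← setIntegral_eq_integral_of_forall_compl_eq_zero (f := fun x => φ x * deriv (plateau R) x)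
    fun x hx => by rw [deriv_plateau_eq_zero hx, mul_zero], ← integral_const_mul]
  refine norm_integral_le_of_norm_le (f := fun x => φ x * deriv (plateau R) x)
    (hφ.abs.const_mul K) (ae_of_all _ fun x => ?_)
  rw [Real.norm_eq_abs, abs_mul, mul_comm]
  exact mul_le_mul_of_nonneg_right (hK x) (abs_nonneg _)

theorem tendsto_integral_mul_deriv_plateau_of_tendsto {φ : ℝ → ℝ}
    (hφ : ∀ R, IntegrableOn φ (annulus R))
    (h : Tendsto (fun R => ∫ x in annulus R, |φ x|) atTop (𝓝 0)) :
    Tendsto (fun R => ∫ x, φ x * deriv (plateau R) x) atTop (𝓝 0) := by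
  obtain ⟨K, hK⟩ := exists_abs_deriv_plateau_le
  refine squeeze_zero_norm (fun R => abs_integral_mul_deriv_plateau_le (hK R) (hφ R)) ?_
  simpa using h.const_mul K

theorem tendsto_integral_mul_deriv_plateau_of_memLp_two {f : ℝ → ℝ} (hf : MemLp f 2) :
    Tendsto (fun R => ∫ x, f x * deriv (plateau R) x) atTop (𝓝 0) :=
  tendsto_integral_mul_deriv_plateau_of_tendsto
    (fun R => have : Fact (volume (annulus R) < ⊤) := ⟨volume_annulus_lt_top R⟩
      (hf.restrict (annulus R)).integrable one_le_two)
    (tendsto_setIntegral_abs_annulus_of_memLp_two hf)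

theorem tendsto_integral_mul_deriv_plateau {φ : ℝ → ℝ} {a b : ℝ} (hφ : Continuous φ)
    (ha : Tendsto φ atBot (𝓝 a)) (hb : Tendsto φ atTop (𝓝 b)) :
    Tendsto (fun R => ∫ x, φ x * deriv (plateau R) x) atTop (𝓝 (a - b)) := by
  set step : ℝ → ℝ := fun x => b + (Iic 0).indicator (fun _ => a - b) x
  have hstep_mul (R : ℝ) : (fun x => step x * deriv (plateau R) x) = fun x =>
      b * deriv (plateau R) x + (Iic 0).indicator (fun x => (a - b) * deriv (plateau R) x) x := by
    ext x
    simp only [step, add_mul, indicator_mul_left]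
  have hint₁ (R : ℝ) := (integrable_deriv_plateau R).const_mul b
  have hint₂ (R : ℝ) :=
    ((integrable_deriv_plateau R).const_mul (a - b)).indicator (measurableSet_Iic (a := 0))
  have hstep_integral {R : ℝ} (hR : 0 ≤ R) : ∫ x, step x * deriv (plateau R) x = a - b := by
    rw [hstep_mul, integral_add (hint₁ R) (hint₂ R), integral_const_mul, integral_deriv_plateau,
      integral_indicator measurableSet_Iic, integral_const_mul, integral_Iic_zero_deriv_plateau hR]
    ring
  have hstep_bot : step =ᶠ[atBot] fun _ => a :=
    (eventually_le_atBot 0).mono fun x hx => by simp [step, hx]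
  have hstep_top : step =ᶠ[atTop] fun _ => b :=
    (eventually_gt_atTop 0).mono fun x hx => by simp [step, not_le.2 hx]
  have hrem : Tendsto (fun R => ∫ x, (φ x - step x) * deriv (plateau R) x) atTop (𝓝 0) := by
    refine tendsto_integral_mul_deriv_plateau_of_tendsto (fun R => ?_)
      (tendsto_setIntegral_abs_annulus_of_tendsto_cocompact ?_)
    · exact (hφ.continuousOn.integrableOn_compact (isCompact_annulus R)).sub
        ((integrableOn_const (volume_annulus_lt_top R).ne).add
          ((integrableOn_const (volume_annulus_lt_top R).ne).indicator measurableSet_Iic))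
    · rw [cocompact_eq_atBot_atTop]
      refine tendsto_sup.2 ⟨?_, ?_⟩
      · simpa using ha.sub (tendsto_const_nhds.congr' hstep_bot.symm)
      · simpa using hb.sub (tendsto_const_nhds.congr' hstep_top.symm)
  refine (zero_add (a - b) ▸ hrem.add_const (a - b)).congr' ?_
  filter_upwards [eventually_ge_atTop 0] with R hR
  have hφψ' : Integrable fun x => φ x * deriv (plateau R) x :=
    (hφ.mul (continuous_deriv_plateau R)).integrable_of_hasCompactSupport
      (hasCompactSupport_plateau R).deriv.mul_left
  have hstep_int : Integrable fun x => step x * deriv (plateau R) x := by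
    rw [hstep_mul]
    exact (hint₁ R).add (hint₂ R)
  simp only [sub_mul]
  rw [integral_sub hφψ' hstep_int, hstep_integral hR, sub_add_cancel]

theorem integrable_and_integral_eq_of_tendsto_integral_mul {α ι : Type*} [MeasurableSpace α]
    {μ : Measure α} {l : Filter ι} [l.IsCountablyGenerated] [l.NeBot] {g : α → ℝ}
    {ψ : ι → α → ℝ} {L : ℝ} (hg : 0 ≤ g) (hψ_nonneg : ∀ i x, 0 ≤ ψ i x)
    (hψ_le : ∀ i x, ψ i x ≤ 1) (hψ : ∀ x, Tendsto (fun i => ψ i x) l (𝓝 1))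
    (hgψ : ∀ i, Integrable (fun x => g x * ψ i x) μ) (hgm : AEStronglyMeasurable g μ)
    (hL : Tendsto (fun i => ∫ x, g x * ψ i x ∂μ) l (𝓝 L)) :
    Integrable g μ ∧ ∫ x, g x ∂μ = L := by
  have hgψ_lim (x : α) : Tendsto (fun i => g x * ψ i x) l (𝓝 (g x)) := by
    simpa using (hψ x).const_mul (g x)
  have hgψ_nonneg (i : ι) : 0 ≤ᵐ[μ] fun x => g x * ψ i x :=
    ae_of_all _ fun x => mul_nonneg (hg x) (hψ_nonneg i x)
  have hfatou : ∫⁻ x, ENNReal.ofReal (g x) ∂μ ≤ ENNReal.ofReal L :=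
    calc ∫⁻ x, ENNReal.ofReal (g x) ∂μ
        = ∫⁻ x, liminf (fun i => ENNReal.ofReal (g x * ψ i x)) l ∂μ :=
          lintegral_congr fun x =>
            ((ENNReal.continuous_ofReal.tendsto _).comp (hgψ_lim x)).liminf_eq.symm
      _ ≤ liminf (fun i => ∫⁻ x, ENNReal.ofReal (g x * ψ i x) ∂μ) l :=
          lintegral_liminf_le' fun i => (hgψ i).aemeasurable.ennreal_ofReal
      _ = liminf (fun i => ENNReal.ofReal (∫ x, g x * ψ i x ∂μ)) l := by
          simp only [ofReal_integral_eq_lintegral_ofReal (hgψ _) (hgψ_nonneg _)]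
      _ = ENNReal.ofReal L := ((ENNReal.continuous_ofReal.tendsto L).comp hL).liminf_eq
  have hint : Integrable g μ :=
    ⟨hgm, (hasFiniteIntegral_iff_ofReal (ae_of_all _ hg)).2
      (hfatou.trans_lt ENNReal.ofReal_lt_top)⟩
  refine ⟨hint, tendsto_nhds_unique ?_ hL⟩
  refine tendsto_integral_filter_of_dominated_convergence g
    (Eventually.of_forall fun i => (hgψ i).aestronglyMeasurable)
    (Eventually.of_forall fun i => ae_of_all _ fun x => ?_) hint (ae_of_all _ hgψ_lim)
  rw [Real.norm_of_nonneg (mul_nonneg (hg x) (hψ_nonneg i x))]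
  exact mul_le_of_le_one_right (hg x) (hψ_le i x)

theorem integrable_and_integral_eq_of_tendsto_integral_mul_plateau {g : ℝ → ℝ} {L : ℝ}
    (hg : Continuous g) (hg_nonneg : 0 ≤ g)
    (hL : Tendsto (fun R => ∫ x, g x * plateau R x) atTop (𝓝 L)) :
    Integrable g ∧ ∫ x, g x = L :=
  integrable_and_integral_eq_of_tendsto_integral_mul hg_nonneg plateau_nonneg plateau_le_one
    tendsto_plateau_atTop
    (fun R => (hg.mul (contDiff_plateau R (n := 0)).continuous).integrable_of_hasCompactSupport
      (hasCompactSupport_plateau R).mul_left)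
    hg.aestronglyMeasurable hL

theorem integral_mul_deriv_add_eq_of_integral_eq_zero {f V g ψ : ℝ → ℝ} {c : ℝ}
    (hf : MemLp f 2) (hV : Continuous V) (hg : Continuous g) (hψ : ContDiff ℝ 1 ψ)
    (hψc : HasCompactSupport ψ)
    (hweak : ∫ x, ((f x + c * V x) * deriv ψ x - g x * ψ x) = 0) :
    (∫ x, f x * deriv ψ x) + c * ∫ x, V x * deriv ψ x = ∫ x, g x * ψ x := by
  have hψ' : Continuous (deriv ψ) := hψ.continuous_deriv le_rfl
  have hfψ' : Integrable fun x => f x * deriv ψ x :=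
    hf.integrable_mul (q := 2) (hψ'.memLp_of_hasCompactSupport hψc.deriv)
  have hVψ' : Integrable fun x => V x * deriv ψ x :=
    (hV.mul hψ').integrable_of_hasCompactSupport hψc.deriv.mul_left
  have hgψ : Integrable fun x => g x * ψ x :=
    (hg.mul hψ.continuous).integrable_of_hasCompactSupport hψc.mul_left
  simp only [add_mul, mul_assoc] at hweak
  rwa [integral_sub (f := fun x => f x * deriv ψ x + c * (V x * deriv ψ x))
      (hfψ'.add (hVψ'.const_mul c)) hgψ, integral_add hfψ' (hVψ'.const_mul c),
    integral_const_mul, sub_eq_zero] at hweak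

theorem statement6_general (d r c : ℝ) (hr : 0 < r)
    (U V : ℝ → ℝ) (h : IsWeakFront d r c U V 0 1 1 0) :
    Integrable (fun ξ => V ξ * (1 - V ξ)) volume ∧
    c = r * ∫ ξ : ℝ, V ξ * (1 - V ξ) ∧ 0 < c := by
  obtain ⟨-, hV, -, hV01, -, hf, -, hweak, -, hVbot, -, hVtop⟩ := h
  have hg_nonneg : 0 ≤ fun ξ => V ξ * (1 - V ξ) := fun ξ =>
    mul_nonneg (hV01 ξ).1 (sub_nonneg.2 (hV01 ξ).2)
  have hlim : Tendsto (fun R => ∫ ξ, r * V ξ * (1 - V ξ) * plateau R ξ) atTop (𝓝 c) := by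
    have := (tendsto_integral_mul_deriv_plateau_of_memLp_two hf).add
      ((tendsto_integral_mul_deriv_plateau hV hVbot hVtop).const_mul c)
    rw [sub_zero, mul_one, zero_add] at this
    exact this.congr fun R => integral_mul_deriv_add_eq_of_integral_eq_zero hf hV (by fun_prop)
      (contDiff_plateau R) (hasCompactSupport_plateau R)
      (hweak _ (contDiff_plateau R) (hasCompactSupport_plateau R))
  obtain ⟨hrg_int, hc⟩ := integrable_and_integral_eq_of_tendsto_integral_mul_plateau
    (by fun_prop) (fun ξ => by simpa [mul_assoc] using mul_nonneg hr.le (hg_nonneg ξ)) hlim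
  have hg_int : Integrable fun ξ => V ξ * (1 - V ξ) := by
    simpa [mul_assoc, hr.ne'] using hrg_int.const_mul r⁻¹
  have hc' : c = r * ∫ ξ, V ξ * (1 - V ξ) := by
    rw [← hc, ← integral_const_mul]
    simp only [mul_assoc]
  obtain ⟨ξ₀, hξ₀⟩ : ∃ ξ, V ξ = 1 / 2 := by
    obtain ⟨a, ha⟩ := (hVtop.eventually (gt_mem_nhds one_half_pos)).exists
    obtain ⟨b, hb⟩ := (hVbot.eventually (lt_mem_nhds one_half_lt_one)).exists
    exact intermediate_value_univ a b hV ⟨ha.le, hb.le⟩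
  refine ⟨hg_int, hc', hc' ▸ mul_pos hr ?_⟩
  exact integral_pos_of_integrable_nonneg_nonzero (x := ξ₀) (by fun_prop) hg_int hg_nonneg
    (by norm_num [hξ₀])

/-- For any propagation front connecting (0,1) to (1,0), the function
V(1-V) is integrable and c = r ∫ V(1-V); in particular c > 0. -/
theorem statement6 (d r c : ℝ) (hd : 0 < d) (hr : 0 < r)
    (U V : ℝ → ℝ) (h : IsWeakFront d r c U V 0 1 1 0) :
    Integrable (fun ξ => V ξ * (1 - V ξ)) volume ∧
    c = r * ∫ ξ : ℝ, V ξ * (1 - V ξ) ∧ 0 < c :=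
  statement6_general d r c hr U V h
end

section
/- Let d > 1, r > 0, c > 0 and α > 0. Suppose (u,v,w) is a solution of the desingularized system (Ode3) defined on all of ℝ, satisfying the unstable-manifold asymptotics with parameter α, and with v(y) > 0 for all y ∈ ℝ. Then the limits u_∞ = lim_{y→+∞} u(y) and v_∞ = lim_{y→+∞} v(y) exist, u_∞ ∈ {0, 1}, v_∞ ∈ [0, 1), and if u_∞ = 0 then v_∞ = 0. -/
open Filter Topology Asymptotics

/-- The desingularized system (Ode3): c u' = -u(1-u)(1-u-dv), v' = w,
w' = -c w - r v (1-u)(1-v), required to hold at every point of the set `s`. -/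
def SolvesOde3 (d r c : ℝ) (u v w : ℝ → ℝ) (s : Set ℝ) : Prop :=
  ∀ y ∈ s,
    HasDerivAt u (-(u y * (1 - u y) * (1 - u y - d * v y)) / c) y ∧
    HasDerivAt v (w y) y ∧
    HasDerivAt w (-(c * w y) - r * v y * (1 - u y) * (1 - v y)) y

/-- Unstable-manifold asymptotics with parameter α as y → -∞:
u(y) = α e^{μy} + O(e^{(μ+η)y}), v(y) = 1 - e^{λy} + O(e^{(λ+η)y}),
w(y) = -λ e^{λy} + O(e^{(λ+η)y}). -/
def UnstableAsym (lam μ η α : ℝ) (u v w : ℝ → ℝ) : Prop :=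
  (fun y => u y - α * Real.exp (μ * y)) =O[atBot] (fun y => Real.exp ((μ + η) * y)) ∧
  (fun y => v y - (1 - Real.exp (lam * y))) =O[atBot] (fun y => Real.exp ((lam + η) * y)) ∧
  (fun y => w y - (-(lam * Real.exp (lam * y)))) =O[atBot] (fun y => Real.exp ((lam + η) * y))

/-!
Near `-∞` the asymptotics place the orbit in `0 < u < 1`, `v < 1`, `w < 0`. The strip
`0 < u < 1` is invariant, and `w` stays negative: at a first zero of `w`, `v` has decreased
since `-∞`, so `v < 1` and `w' = -r v (1 - u) (1 - v) < 0`. Hence `v` decreases to a limit in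
`[0, 1)`. The quantity `1 - u - d v` has derivative `-d w > 0` at its zeros, so once positive it
stays positive; thus `u` is eventually monotone and converges as well. The limit is an equilibrium,
since a nonzero limit of `u'` or of `(c v + w)'` would make `u` or `v` unbounded.
-/

open Set

section RealCalculus

variable {f f' : ℝ → ℝ}

theorem tendsto_atTop_atTop_of_hasDerivAt_ge {ε : ℝ} (hf : ∀ x, HasDerivAt f (f' x) x)
    (hε : 0 < ε) (hf' : ∀ᶠ x in atTop, ε ≤ f' x) : Tendsto f atTop atTop := by
  obtain ⟨N, hN⟩ := eventually_atTop.1 hf'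
  have hlin : ∀ y, N ≤ y → f N + ε * (y - N) ≤ f y := fun y hy => by
    have := (convex_Ici N).mul_sub_le_image_sub_of_le_deriv
      (fun x _ => (hf x).continuousAt.continuousWithinAt)
      (fun x _ => (hf x).differentiableAt.differentiableWithinAt)
      (fun x hx => (hf x).deriv ▸ hN x (interior_subset hx)) N (mem_Ici.2 le_rfl) y hy hy
    linarith
  refine tendsto_atTop_mono' atTop (eventually_atTop.2 ⟨N, hlin⟩) ?_
  exact tendsto_atTop_add_const_left _ _
    ((tendsto_atTop_add_const_right _ _ tendsto_id).const_mul_atTop hε)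

theorem nonpos_of_tendsto_of_hasDerivAt_tendsto {F L : ℝ} (hf : ∀ x, HasDerivAt f (f' x) x)
    (hF : Tendsto f atTop (𝓝 F)) (hL : Tendsto f' atTop (𝓝 L)) : L ≤ 0 := by
  by_contra! hL0
  exact not_tendsto_atTop_of_tendsto_nhds hF <| tendsto_atTop_atTop_of_hasDerivAt_ge hf
    (half_pos hL0) (hL.eventually (le_mem_nhds (half_lt_self hL0)))

theorem eq_zero_of_tendsto_of_hasDerivAt_tendsto {F L : ℝ} (hf : ∀ x, HasDerivAt f (f' x) x)
    (hF : Tendsto f atTop (𝓝 F)) (hL : Tendsto f' atTop (𝓝 L)) : L = 0 :=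
  le_antisymm (nonpos_of_tendsto_of_hasDerivAt_tendsto hf hF hL) <| neg_nonpos.1 <|
    nonpos_of_tendsto_of_hasDerivAt_tendsto (fun x => (hf x).neg) hF.neg hL.neg

theorem nonpos_of_tendsto_of_hasDerivAt_add_tendsto {g' : ℝ → ℝ} {c F M : ℝ}
    (hf : ∀ x, HasDerivAt f (f' x) x) (hg : ∀ x, HasDerivAt (fun y => c * f y + f' y) (g' x) x)
    (hF : Tendsto f atTop (𝓝 F)) (hM : Tendsto g' atTop (𝓝 M)) : M ≤ 0 := by
  by_contra! hM0
  have hg_top : Tendsto (fun y => c * f y + f' y) atTop atTop :=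
    tendsto_atTop_atTop_of_hasDerivAt_ge hg (half_pos hM0)
      (hM.eventually (le_mem_nhds (half_lt_self hM0)))
  have hf'_top : Tendsto f' atTop atTop := by
    convert hg_top.atTop_add (hF.const_mul (-c)) using 2
    ring
  exact not_tendsto_atTop_of_tendsto_nhds hF <|
    tendsto_atTop_atTop_of_hasDerivAt_ge hf one_pos (hf'_top.eventually_ge_atTop 1)

theorem eq_zero_of_tendsto_of_hasDerivAt_add_tendsto {g' : ℝ → ℝ} {c F M : ℝ}
    (hf : ∀ x, HasDerivAt f (f' x) x) (hg : ∀ x, HasDerivAt (fun y => c * f y + f' y) (g' x) x)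
    (hF : Tendsto f atTop (𝓝 F)) (hM : Tendsto g' atTop (𝓝 M)) : M = 0 := by
  refine le_antisymm (nonpos_of_tendsto_of_hasDerivAt_add_tendsto hf hg hF hM) <| neg_nonpos.1 <|
    nonpos_of_tendsto_of_hasDerivAt_add_tendsto (c := c) (fun x => (hf x).neg) (fun x => ?_)
      hF.neg hM.neg
  have hneg : (fun y => c * (-f) y + (fun x => -f' x) y) = fun y => -(c * f y + f' y) := by
    ext y
    simp only [Pi.neg_apply]
    ring
  exact hneg ▸ (hg x).fun_neg

theorem neg_of_hasDerivAt_neg_at_first_zero {a : ℝ} (hf : ∀ x, HasDerivAt f (f' x) x)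
    (ha : f a < 0) (hzero : ∀ x, a < x → f x = 0 → (∀ z ∈ Ico a x, f z < 0) → f' x < 0) :
    ∀ x, a ≤ x → f x < 0 := by
  intro b hab
  by_contra! hb
  have hcont : Continuous f := continuous_iff_continuousAt.2 fun x => (hf x).continuousAt
  set S := Icc a b ∩ {x | 0 ≤ f x}
  have hS_bdd : BddBelow S := ⟨a, fun x hx => hx.1.1⟩
  have hx₁ : sInf S ∈ S := (isClosed_Icc.inter (isClosed_le continuous_const hcont)).csInf_mem
    ⟨b, ⟨hab, le_rfl⟩, hb⟩ hS_bdd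
  set x₁ := sInf S
  have hbefore : ∀ z ∈ Ico a x₁, f z < 0 := fun z hz =>
    not_le.1 fun h => hz.2.not_ge (csInf_le hS_bdd ⟨⟨hz.1, hz.2.le.trans hx₁.1.2⟩, h⟩)
  have hax₁ : a < x₁ := hx₁.1.1.lt_of_ne fun h => (h ▸ hx₁.2).not_gt ha
  have hleft : ∀ᶠ z in 𝓝[<] x₁, f z < 0 := by
    filter_upwards [Ioo_mem_nhdsLT hax₁] with z hz using hbefore z ⟨hz.1.le, hz.2⟩
  have hfx₁ : f x₁ = 0 := le_antisymm
    (le_of_tendsto (hcont.continuousAt.tendsto.mono_left nhdsWithin_le_nhds)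
      (hleft.mono fun z hz => hz.le)) hx₁.2
  -- to the left of a zero approached from below, every difference quotient is positive
  have hslope : 0 ≤ f' x₁ := by
    refine ge_of_tendsto ((hasDerivAt_iff_tendsto_slope_left_right.1 (hf x₁)).1) ?_
    filter_upwards [hleft, self_mem_nhdsWithin] with z hz hzx
    rw [slope_def_field, hfx₁, sub_zero]
    exact (div_pos_of_neg_of_neg hz (sub_neg.2 hzx)).le
  exact hslope.not_gt (hzero x₁ hax₁ hfx₁ hbefore)

theorem pos_of_hasDerivAt_mul_self {b : ℝ → ℝ} (hb : Continuous b)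
    (hf : ∀ x, HasDerivAt f (b x * f x) x) {a : ℝ} (ha : 0 < f a) (x : ℝ) : 0 < f x := by
  set B : ℝ → ℝ := fun y => ∫ t in a..y, b t
  have hB : ∀ y, HasDerivAt B (b y) y := fun y =>
    intervalIntegral.integral_hasDerivAt_right (hb.intervalIntegrable a y)
      (hb.stronglyMeasurableAtFilter _ _) hb.continuousAt
  -- the integrating factor `exp (-B)` makes `f` constant
  have hconst : ∀ y, f y * Real.exp (-B y) = f a * Real.exp (-B a) := fun y =>
    is_const_of_deriv_eq_zero (fun x => ((hf x).mul (hB x).neg.exp).differentiableAt)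
      (fun x => by rw [((hf x).mul (hB x).neg.exp).deriv]; ring) y a
  have := hconst x ▸ mul_pos ha (Real.exp_pos (-B a))
  exact pos_of_mul_pos_left this (Real.exp_pos _).le

theorem exists_tendsto_of_antitoneOn_Ici {a : ℝ} (hf : AntitoneOn f (Ici a))
    (hbdd : BddBelow (f '' Ici a)) : ∃ L, Tendsto f atTop (𝓝 L) := by
  have hg : Antitone fun y => f (max a y) := fun x y hxy =>
    hf (le_max_left a x) (le_max_left a y) (max_le_max_left a hxy)
  refine ⟨_, (tendsto_atTop_ciInf hg ?_).congr' ?_⟩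
  · exact hbdd.mono (range_subset_iff.2 fun y => mem_image_of_mem f (le_max_left a y))
  · filter_upwards [eventually_ge_atTop a] with y hy
    rw [max_eq_right hy]

end RealCalculus

theorem tendsto_div_exp_of_isBigO {g : ℝ → ℝ} {a k η : ℝ} (hη : 0 < η)
    (h : (fun y => g y - a * Real.exp (k * y)) =O[atBot] fun y => Real.exp ((k + η) * y)) :
    Tendsto (fun y => g y / Real.exp (k * y)) atBot (𝓝 a) := by
  have hlo : (fun y => Real.exp ((k + η) * y)) =o[atBot] fun y => Real.exp (k * y) := by
    rw [Real.isLittleO_exp_comp_exp_comp]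
    convert tendsto_id.const_mul_atBot_of_neg (neg_neg_of_pos hη) using 2 with y
    simp only [id_eq, neg_mul]
    ring
  have := (h.trans_isLittleO hlo).tendsto_div_nhds_zero.add_const a
  simp only [zero_add] at this
  refine this.congr fun y => ?_
  field_simp
  ring

theorem eventually_pos_of_isBigO_exp {g : ℝ → ℝ} {a k η : ℝ} (ha : 0 < a) (hη : 0 < η)
    (h : (fun y => g y - a * Real.exp (k * y)) =O[atBot] fun y => Real.exp ((k + η) * y)) :
    ∀ᶠ y in atBot, 0 < g y := by
  filter_upwards [(tendsto_div_exp_of_isBigO hη h).eventually_const_lt ha] with y hy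
  exact (div_pos_iff_of_pos_right (Real.exp_pos _)).1 hy

theorem UnstableAsym.eventually_atBot_bounds {lam μ η α : ℝ} {u v w : ℝ → ℝ}
    (hasym : UnstableAsym lam μ η α u v w) (hα : 0 < α) (hlam : 0 < lam) (hμ : 0 < μ)
    (hη : 0 < η) : ∀ᶠ y in atBot, u y ∈ Ioo 0 1 ∧ v y < 1 ∧ w y < 0 := by
  obtain ⟨hOu, hOv, hOw⟩ := hasym
  have hexp : ∀ k : ℝ, 0 < k → Tendsto (fun y => Real.exp (k * y)) atBot (𝓝 0) := fun k hk =>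
    Real.tendsto_exp_atBot.comp (tendsto_id.const_mul_atBot hk)
  have hu_zero : Tendsto u atBot (𝓝 0) := by
    simpa using (hOu.trans_tendsto (hexp _ (add_pos hμ hη))).add ((hexp μ hμ).const_mul α)
  filter_upwards [eventually_pos_of_isBigO_exp hα hη hOu, hu_zero.eventually (gt_mem_nhds one_pos),
    eventually_pos_of_isBigO_exp (g := fun y => 1 - v y) one_pos hη
      (hOv.neg_left.congr_left fun y => by ring),
    eventually_pos_of_isBigO_exp (g := fun y => -w y) hlam hη
      (hOw.neg_left.congr_left fun y => by ring)] with y hu₀ hu₁ hv hw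
  exact ⟨⟨hu₀, hu₁⟩, sub_pos.1 hv, neg_pos.1 hw⟩

section Ode3

variable {d r c : ℝ} {u v w : ℝ → ℝ}

theorem SolvesOde3.hasDerivAt_u (hsol : SolvesOde3 d r c u v w univ) (y : ℝ) :
    HasDerivAt u (-(u y * (1 - u y) * (1 - u y - d * v y)) / c) y :=
  (hsol y (mem_univ y)).1

theorem SolvesOde3.hasDerivAt_v (hsol : SolvesOde3 d r c u v w univ) (y : ℝ) :
    HasDerivAt v (w y) y :=
  (hsol y (mem_univ y)).2.1

theorem SolvesOde3.hasDerivAt_w (hsol : SolvesOde3 d r c u v w univ) (y : ℝ) :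
    HasDerivAt w (-(c * w y) - r * v y * (1 - u y) * (1 - v y)) y :=
  (hsol y (mem_univ y)).2.2

theorem SolvesOde3.mem_Ioo_u (hsol : SolvesOde3 d r c u v w univ) {Y : ℝ}
    (hY : u Y ∈ Ioo 0 1) (y : ℝ) : u y ∈ Ioo 0 1 := by
  have hu : Continuous u :=
    continuous_iff_continuousAt.2 fun y => (hsol.hasDerivAt_u y).continuousAt
  have hv : Continuous v :=
    continuous_iff_continuousAt.2 fun y => (hsol.hasDerivAt_v y).continuousAt
  -- both `u` and `1 - u` solve a linear equation `f' = b f` with continuous `b`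
  constructor
  · refine pos_of_hasDerivAt_mul_self (b := fun y => -((1 - u y) * (1 - u y - d * v y)) / c)
      (by fun_prop) (fun y => ?_) hY.1 y
    exact (hsol.hasDerivAt_u y).congr_deriv (by ring)
  · refine sub_pos.1 <| pos_of_hasDerivAt_mul_self (f := fun y => 1 - u y)
      (b := fun y => u y * (1 - u y - d * v y) / c) (by fun_prop) (fun y => ?_) (sub_pos.2 hY.2) y
    exact ((hsol.hasDerivAt_u y).const_sub 1).congr_deriv (by ring)

theorem SolvesOde3.w_neg (hsol : SolvesOde3 d r c u v w univ) (hr : 0 < r) (hv : ∀ y, 0 < v y)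
    (hu : ∀ y, u y < 1) {Y : ℝ} (hYw : ∀ y ≤ Y, w y < 0) (hYv : v Y < 1) (y : ℝ) : w y < 0 := by
  rcases le_or_gt y Y with hy | hy
  · exact hYw y hy
  refine neg_of_hasDerivAt_neg_at_first_zero hsol.hasDerivAt_w (hYw Y le_rfl)
    (fun x hYx hx hbefore => ?_) y hy.le
  have hvx : v x ≤ v Y := by
    refine antitoneOn_of_hasDerivWithinAt_nonpos (convex_Icc Y x)
      (fun z _ => (hsol.hasDerivAt_v z).continuousAt.continuousWithinAt)
      (fun z _ => (hsol.hasDerivAt_v z).hasDerivWithinAt) (fun z hz => ?_)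
      (left_mem_Icc.2 hYx.le) (right_mem_Icc.2 hYx.le) hYx.le
    rw [interior_Icc] at hz
    exact (hbefore z ⟨hz.1.le, hz.2⟩).le
  have := mul_pos (mul_pos (mul_pos hr (hv x)) (sub_pos.2 (hu x))) (sub_pos.2 (hvx.trans_lt hYv))
  rw [hx]
  linarith

theorem SolvesOde3.one_sub_sub_mul_pos_of_le (hsol : SolvesOde3 d r c u v w univ) (hd : 0 < d)
    (hw : ∀ y, w y < 0) {y₁ : ℝ} (h₁ : 0 < 1 - u y₁ - d * v y₁) (y : ℝ) (hy : y₁ ≤ y) :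
    0 < 1 - u y - d * v y := by
  have hG : ∀ y, HasDerivAt (fun y => -(1 - u y - d * v y))
      (d * w y - u y * (1 - u y) * (1 - u y - d * v y) / c) y := fun y =>
    (((hsol.hasDerivAt_u y).const_sub 1).fun_sub
      ((hsol.hasDerivAt_v y).const_mul d)).fun_neg.congr_deriv (by ring)
  refine neg_neg_iff_pos.1 <| neg_of_hasDerivAt_neg_at_first_zero hG (neg_neg_of_pos h₁)
    (fun x _ hx _ => ?_) y hy
  rw [neg_eq_zero.1 hx, mul_zero, zero_div, sub_zero]
  exact mul_neg_of_pos_of_neg hd (hw x)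

theorem SolvesOde3.exists_tendsto_u (hsol : SolvesOde3 d r c u v w univ) (hc : 0 < c)
    (hd : 0 < d) (hu : ∀ y, u y ∈ Ioo 0 1) (hw : ∀ y, w y < 0) :
    ∃ U, Tendsto u atTop (𝓝 U) := by
  have hu₀ : ∀ y, 0 < u y * (1 - u y) := fun y => mul_pos (hu y).1 (sub_pos.2 (hu y).2)
  by_cases hG : ∀ y, 1 - u y - d * v y ≤ 0
  · have hmono : Monotone u := monotone_of_hasDerivAt_nonneg hsol.hasDerivAt_u fun y =>
      div_nonneg (neg_nonneg.2 (mul_nonpos_of_nonneg_of_nonpos (hu₀ y).le (hG y))) hc.le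
    exact ⟨_, tendsto_atTop_ciSup hmono ⟨1, forall_mem_range.2 fun y => (hu y).2.le⟩⟩
  · obtain ⟨y₁, h₁⟩ := not_forall.1 hG
    refine exists_tendsto_of_antitoneOn_Ici (a := y₁) (antitoneOn_of_hasDerivWithinAt_nonpos
      (convex_Ici y₁) (fun z _ => (hsol.hasDerivAt_u z).continuousAt.continuousWithinAt)
      (fun z _ => (hsol.hasDerivAt_u z).hasDerivWithinAt) fun z hz => ?_)
      ⟨0, forall_mem_image.2 fun y _ => (hu y).1.le⟩
    rw [interior_Ici] at hz
    exact div_nonpos_of_nonpos_of_nonneg (neg_nonpos.2 (mul_pos (hu₀ z)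
      (hsol.one_sub_sub_mul_pos_of_le hd hw (not_le.1 h₁) z hz.le)).le) hc.le

theorem SolvesOde3.u_equilibrium_of_tendsto (hsol : SolvesOde3 d r c u v w univ) (hc : c ≠ 0)
    {U V : ℝ} (hU : Tendsto u atTop (𝓝 U)) (hV : Tendsto v atTop (𝓝 V)) :
    U * (1 - U) * (1 - U - d * V) = 0 := by
  have := eq_zero_of_tendsto_of_hasDerivAt_tendsto hsol.hasDerivAt_u hU
    (((hU.mul (tendsto_const_nhds.sub hU)).mul
      ((tendsto_const_nhds.sub hU).sub (hV.const_mul d))).neg.div_const c)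
  simpa [hc] using this

theorem SolvesOde3.v_equilibrium_of_tendsto (hsol : SolvesOde3 d r c u v w univ) (hr : r ≠ 0)
    {U V : ℝ} (hU : Tendsto u atTop (𝓝 U)) (hV : Tendsto v atTop (𝓝 V)) :
    V * (1 - U) * (1 - V) = 0 := by
  have hφ : ∀ y, HasDerivAt (fun y => c * v y + w y) (-(r * (v y * (1 - u y) * (1 - v y)))) y :=
    fun y => (((hsol.hasDerivAt_v y).const_mul c).fun_add (hsol.hasDerivAt_w y)).congr_deriv
      (by ring)
  have := eq_zero_of_tendsto_of_hasDerivAt_add_tendsto hsol.hasDerivAt_v hφ hV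
    ((((hV.mul (tendsto_const_nhds.sub hU)).mul (tendsto_const_nhds.sub hV)).const_mul r).neg)
  simpa [hr] using this

end Ode3

theorem ode3_equilibrium_cases {d U V : ℝ} (hV : V ≠ 1)
    (hU_eq : U * (1 - U) * (1 - U - d * V) = 0) (hV_eq : V * (1 - U) * (1 - V) = 0) :
    (U = 0 ∨ U = 1) ∧ (U = 0 → V = 0) := by
  have hV1 : 1 - V ≠ 0 := sub_ne_zero.2 hV.symm
  have hV0 : U ≠ 1 → V = 0 := fun hU => by
    simpa [hV1, sub_ne_zero.2 (Ne.symm hU)] using hV_eq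
  refine ⟨?_, fun hU => hV0 (by rw [hU]; norm_num)⟩
  by_cases hU : U = 1
  · exact Or.inr hU
  · left
    simpa [hV0 hU, sub_ne_zero.2 (Ne.symm hU)] using hU_eq

/-- If the solution on the unstable manifold is global and v stays positive,
then u and v have limits as y → +∞, with u_∞ ∈ {0,1}, v_∞ ∈ [0,1), and
v_∞ = 0 whenever u_∞ = 0. -/
theorem statement13 (d r c α : ℝ) (hd : 1 < d) (hr : 0 < r) (hc : 0 < c) (hα : 0 < α)
    (lam μ η : ℝ) (hlam : lam = (-c + Real.sqrt (c ^ 2 + 4 * r)) / 2)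
    (hmu : μ = (d - 1) / c) (heta : η = min lam μ)
    (u v w : ℝ → ℝ)
    (hsol : SolvesOde3 d r c u v w Set.univ)
    (hasym : UnstableAsym lam μ η α u v w)
    (hv : ∀ y : ℝ, 0 < v y) :
    ∃ uinf vinf : ℝ,
      Tendsto u atTop (𝓝 uinf) ∧ Tendsto v atTop (𝓝 vinf) ∧
      (uinf = 0 ∨ uinf = 1) ∧ 0 ≤ vinf ∧ vinf < 1 ∧ (uinf = 0 → vinf = 0) := by
  have hlam_pos : 0 < lam := by
    have := (Real.lt_sqrt hc.le).2 (by linarith : c ^ 2 < c ^ 2 + 4 * r)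
    rw [hlam]
    linarith
  have hμ_pos : 0 < μ := hmu ▸ div_pos (sub_pos.2 hd) hc
  have hη : 0 < η := heta ▸ lt_min hlam_pos hμ_pos
  obtain ⟨Y, hY⟩ := eventually_atBot.1 (hasym.eventually_atBot_bounds hα hlam_pos hμ_pos hη)
  have hu : ∀ y, u y ∈ Ioo 0 1 := hsol.mem_Ioo_u (hY Y le_rfl).1
  have hw : ∀ y, w y < 0 :=
    hsol.w_neg hr hv (fun y => (hu y).2) (fun y hy => (hY y hy).2.2) (hY Y le_rfl).2.1
  have hv_bdd : BddBelow (range v) := ⟨0, forall_mem_range.2 fun y => (hv y).le⟩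
  have hV := tendsto_atTop_ciInf (antitone_of_hasDerivAt_nonpos hsol.hasDerivAt_v
    fun y => (hw y).le) hv_bdd
  have hV1 : ⨅ y, v y < 1 := (ciInf_le hv_bdd Y).trans_lt (hY Y le_rfl).2.1
  obtain ⟨U, hU⟩ := hsol.exists_tendsto_u hc (by linarith) hu hw
  obtain ⟨hU01, hU0⟩ := ode3_equilibrium_cases hV1.ne (hsol.u_equilibrium_of_tendsto hc.ne' hU hV)
    (hsol.v_equilibrium_of_tendsto hr.ne' hU hV)
  exact ⟨U, _, hU, hV, hU01, le_ciInf fun y => (hv y).le, hV1, hU0⟩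
end
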